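/- For α ≥ 1, β ≥ 0, γ ≥ e², the function f(x) = x^α · ln(x^β + γ) belongs to S; in particular it is submultiplicative: (ab)^α ln((ab)^β + γ) ≤ a^α ln(a^β + γ) · b^α ln(b^β + γ) for all a, b ≥ 0. -/

import Mathlib

/-!
Submultiplicativity comes from the logarithmic factor: `log (uv + γ) ≤ log (u + γ) + log (v + γ)`,
and when both logarithms are at least `2` (this is where `γ ≥ e²` enters) their sum is at most
their product. For convexity, the derivative of `x ^ α * log (x ^ β + γ)` factors as
`x ^ (α - 1) * (α * log (x ^ β + γ) + β * x ^ β / (x ^ β + γ))`, a product of nonnegative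
monotone functions, hence monotone.
-/

/-- Membership in the class `S`: `f : [0,∞) → [0,∞)` is submultiplicative,
convex, vanishes at `0`, and is not identically zero. -/
def MemS (f : ℝ → ℝ) : Prop :=
  (∀ x, 0 ≤ x → 0 ≤ f x) ∧
  (∀ a b, 0 ≤ a → 0 ≤ b → f (a * b) ≤ f a * f b) ∧
  ConvexOn ℝ (Set.Ici 0) f ∧
  f 0 = 0 ∧
  (∃ x, 0 ≤ x ∧ f x ≠ 0)

open Real Set

lemma rpow_add_pos {β γ x : ℝ} (hx : 0 ≤ x) (hγ : 0 < γ) : 0 < x ^ β + γ := by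
  have := rpow_nonneg hx β
  linarith

lemma two_le_log_add {γ u : ℝ} (hγ : exp 2 ≤ γ) (hu : 0 ≤ u) : 2 ≤ log (u + γ) := by
  rw [← log_exp 2]
  exact log_le_log (exp_pos 2) (by linarith)

lemma log_mul_add_le_log_add_mul_log_add {γ u v : ℝ} (hγ : exp 2 ≤ γ) (hu : 0 ≤ u)
    (hv : 0 ≤ v) : log (u * v + γ) ≤ log (u + γ) * log (v + γ) := by
  have hγ1 : 1 ≤ γ := le_trans (one_le_exp zero_le_two) hγ
  have hlog : log (u * v + γ) ≤ log (u + γ) + log (v + γ) := by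
    rw [← log_mul (by positivity) (by positivity)]
    exact log_le_log (by positivity) (by nlinarith)
  nlinarith [two_le_log_add hγ hu, two_le_log_add hγ hv]

lemma rpow_mul_log_rpow_add_le (α β : ℝ) {γ a b : ℝ} (hγ : exp 2 ≤ γ) (ha : 0 ≤ a)
    (hb : 0 ≤ b) :
    (a * b) ^ α * log ((a * b) ^ β + γ) ≤
      (a ^ α * log (a ^ β + γ)) * (b ^ α * log (b ^ β + γ)) := by
  rw [mul_rpow ha hb, mul_rpow ha hb]
  calc a ^ α * b ^ α * log (a ^ β * b ^ β + γ)
      ≤ a ^ α * b ^ α * (log (a ^ β + γ) * log (b ^ β + γ)) :=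
        mul_le_mul_of_nonneg_left
          (log_mul_add_le_log_add_mul_log_add hγ (rpow_nonneg ha β) (rpow_nonneg hb β))
          (by positivity)
    _ = a ^ α * log (a ^ β + γ) * (b ^ α * log (b ^ β + γ)) := by ring

lemma hasDerivAt_rpow_mul_log_rpow_add (α β : ℝ) {γ x : ℝ} (hγ : 0 < γ) (hx : 0 < x) :
    HasDerivAt (fun x => x ^ α * log (x ^ β + γ))
      (x ^ (α - 1) * (α * log (x ^ β + γ) + β * (x ^ β / (x ^ β + γ)))) x := by
  have hD : x ^ β + γ ≠ 0 := by positivity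
  have hinner := (hasDerivAt_rpow_const (p := β) (Or.inl hx.ne')).add_const γ
  refine ((hasDerivAt_rpow_const (p := α) (Or.inl hx.ne')).mul (hinner.log hD)).congr_deriv ?_
  rw [rpow_sub hx, rpow_sub hx, rpow_one]
  field_simp

lemma monotoneOn_rpow_div_rpow_add {β γ : ℝ} (hβ : 0 ≤ β) (hγ : 0 < γ) :
    MonotoneOn (fun x => x ^ β / (x ^ β + γ)) (Ici 0) := by
  intro x hx y hy hxy
  have hxy' : x ^ β ≤ y ^ β := rpow_le_rpow hx hxy hβ
  have := rpow_nonneg (mem_Ici.mp hx) β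
  rw [div_le_div_iff₀ (rpow_add_pos hx hγ) (rpow_add_pos hy hγ)]
  nlinarith

lemma monotoneOn_log_rpow_add {β γ : ℝ} (hβ : 0 ≤ β) (hγ : 0 < γ) :
    MonotoneOn (fun x => log (x ^ β + γ)) (Ici 0) := fun x hx _ _ hxy =>
  log_le_log (rpow_add_pos hx hγ) (by gcongr)

lemma convexOn_rpow_mul_log_rpow_add {α β γ : ℝ} (hα : 1 ≤ α) (hβ : 0 ≤ β) (hγ : 1 ≤ γ) :
    ConvexOn ℝ (Ici 0) (fun x => x ^ α * log (x ^ β + γ)) := by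
  have hγ0 : 0 < γ := by linarith
  have hderiv : ∀ x ∈ interior (Ici (0 : ℝ)), HasDerivAt (fun x => x ^ α * log (x ^ β + γ))
      (x ^ (α - 1) * (α * log (x ^ β + γ) + β * (x ^ β / (x ^ β + γ)))) x := fun x hx =>
    hasDerivAt_rpow_mul_log_rpow_add α β hγ0 (by simpa using hx)
  have hmono : MonotoneOn
      (fun x => x ^ (α - 1) * (α * log (x ^ β + γ) + β * (x ^ β / (x ^ β + γ)))) (Ici 0) := by
    refine (monotoneOn_rpow_Ici_of_exponent_nonneg (by linarith)).mul ?_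
      (fun x hx => rpow_nonneg hx _) (fun x hx => ?_)
    · exact fun x hx y hy hxy => add_le_add
        (mul_le_mul_of_nonneg_left (monotoneOn_log_rpow_add hβ hγ0 hx hy hxy) (by linarith))
        (mul_le_mul_of_nonneg_left (monotoneOn_rpow_div_rpow_add hβ hγ0 hx hy hxy) hβ)
    · have := log_nonneg (by linarith [rpow_nonneg (mem_Ici.mp hx) β] : 1 ≤ x ^ β + γ)
      have := rpow_nonneg (mem_Ici.mp hx) β
      positivity
  refine MonotoneOn.convexOn_of_deriv (convex_Ici 0) ?_
    (fun x hx => (hderiv x hx).differentiableAt.differentiableWithinAt) ?_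
  · intro x hx
    have hpow : ContinuousAt (fun x : ℝ => x ^ α) x :=
      continuousAt_rpow_const x α (Or.inr (by linarith))
    have hlog : ContinuousAt (fun x : ℝ => log (x ^ β + γ)) x :=
      ((continuousAt_rpow_const x β (Or.inr hβ)).add continuousAt_const).log
        (show x ^ β + γ ≠ 0 from (rpow_add_pos hx hγ0).ne')
    exact (hpow.mul hlog).continuousWithinAt
  · intro x hx y hy hxy
    rw [(hderiv x hx).deriv, (hderiv y hy).deriv]
    exact hmono (interior_subset hx) (interior_subset hy) hxy

/-- For `alpha >= 1`, `beta >= 0`, `gamma >= e^2`, the function `x ^ alpha * log (x ^ beta + gamma)` belongs to `S`; in particular it is submultiplicative. -/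
theorem stmt_12 (α β γ : ℝ) (hα : 1 ≤ α) (hβ : 0 ≤ β) (hγ : Real.exp 2 ≤ γ) :
    MemS (fun x => x ^ α * Real.log (x ^ β + γ)) ∧
      ∀ a b : ℝ, 0 ≤ a → 0 ≤ b →
        (a * b) ^ α * Real.log ((a * b) ^ β + γ) ≤
          (a ^ α * Real.log (a ^ β + γ)) * (b ^ α * Real.log (b ^ β + γ)) := by
  have hγ1 : 1 ≤ γ := le_trans (one_le_exp zero_le_two) hγ
  have hsub := fun a b (ha : 0 ≤ a) (hb : 0 ≤ b) => rpow_mul_log_rpow_add_le α β hγ ha hb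
  refine ⟨⟨fun x hx => ?_, hsub, convexOn_rpow_mul_log_rpow_add hα hβ hγ1, ?_,
    ⟨1, zero_le_one, ?_⟩⟩, hsub⟩
  · have := two_le_log_add hγ (rpow_nonneg hx β)
    have := rpow_nonneg hx α
    positivity
  · simp [zero_rpow (by linarith : α ≠ 0)]
  · have := two_le_log_add hγ (zero_le_one (α := ℝ))
    simp only [one_rpow, one_mul]
    positivity
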